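/- arXiv:2602.05071 — 6 statements merged into one kernel-verified Lean document; each statement's English description precedes it below -/
import Mathlib

section
/- Let (u1,u2) be a positive solution of u1(r1 - θH - c1 u1) - (d+q)u1 + d u2 = 0 and u2(r2 - (1-θ)H - c2 u2) + (d+q)u1 - d u2 = 0, and suppose (u1',u2') solves the linear system obtained by differentiating in θ: -u1²(H + c1 u1') + d(u2' u1 - u1' u2) = 0 and -u2²(-H + c2 u2') + (d+q)(u1' u2 - u2' u1) = 0. Then u1' + u2' = -[H(u1+u2)((d+q)u1² - d u2²) + H u1² u2² (c2 - c1)] / det(A), where A = [[-(c1 u1² + d u2), d u1],[(d+q) u2, -(c2 u2² + (d+q) u1)]]. -/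
theorem stmt_1 (d q c1 c2 H r1 r2 θ u1 u2 v1 v2 : ℝ)
    (hd : 0 < d) (hq : 0 < q) (hc1 : 0 < c1) (hc2 : 0 < c2) (hH : 0 < H)
    (hθ : θ ∈ Set.Icc (0:ℝ) 1) (hu1 : 0 < u1) (hu2 : 0 < u2)
    (heq1 : u1 * (r1 - θ * H - c1 * u1) - (d + q) * u1 + d * u2 = 0)
    (heq2 : u2 * (r2 - (1 - θ) * H - c2 * u2) + (d + q) * u1 - d * u2 = 0)
    (hlin1 : -u1 ^ 2 * (H + c1 * v1) + d * (v2 * u1 - v1 * u2) = 0)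
    (hlin2 : -u2 ^ 2 * (-H + c2 * v2) + (d + q) * (v1 * u2 - v2 * u1) = 0)
    (hdet : (c1 * u1 ^ 2 + d * u2) * (c2 * u2 ^ 2 + (d + q) * u1) - d * (d + q) * u1 * u2 ≠ 0) :
    v1 + v2 =
      -(H * (u1 + u2) * ((d + q) * u1 ^ 2 - d * u2 ^ 2) + H * u1 ^ 2 * u2 ^ 2 * (c2 - c1)) /
        ((c1 * u1 ^ 2 + d * u2) * (c2 * u2 ^ 2 + (d + q) * u1) - d * (d + q) * u1 * u2) := by
  rw [eq_div_iff hdet]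
  linear_combination (-(c2 * u2 ^ 2 + (d + q) * u1) - (d + q) * u2) * hlin1 +
    (-(c1 * u1 ^ 2 + d * u2) - d * u1) * hlin2
end

section
/- Suppose r2 - (1-θ)H - d + (d+q)t > 0 along the relevant range. If (r1√(d+q) - r2√d)/(√(d+q) - √d) > 2d + q + H√(d+q)/(√(d+q) - √d), then for every θ ∈ [0,1], f(√(d/(d+q)), θ) < 0, where f(t,θ) = t(r2 - (1-θ)H - d + (d+q)t) - (r1 - θH - (d+q) + d/t). -/
/-!
Put `s = √d`, `u = √(d + q)` and `t₀ = √(d / (d + q)) = s / u`. Since `(d + q) t₀ = d / t₀ = s u`,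
clearing the denominator gives the identity `u f(t₀, θ) = (u - s) (g(θ) - R)` with
`R = (r₁ u - r₂ s) / (u - s)`. So `f(t₀, θ) < 0` exactly when `R > g(θ)`, and as `g` is increasing
it suffices that `R > g(1)`.
-/

open Real

namespace SqrtRatioCriterion

noncomputable def f (d q H r1 r2 t θ : ℝ) : ℝ :=
  t * (r2 - (1 - θ) * H - d + (d + q) * t) - (r1 - θ * H - (d + q) + d / t)

noncomputable def g (d q H θ : ℝ) : ℝ :=
  2 * d + q + H * (θ * √(d + q) - (1 - θ) * √d) / (√(d + q) - √d)

theorem g_monotone {d q H : ℝ} (hq : 0 ≤ q) (hH : 0 ≤ H) : Monotone (g d q H) := by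
  intro a b hab
  have : √d ≤ √(d + q) := Real.sqrt_le_sqrt (by linarith)
  unfold g
  gcongr

theorem g_one (d q H : ℝ) :
    g d q H 1 = 2 * d + q + H * √(d + q) / (√(d + q) - √d) := by
  simp [g]

theorem sqrt_mul_f_eq {d q : ℝ} (hd : 0 < d) (hq : 0 < q) (H r1 r2 θ : ℝ) :
    √(d + q) * f d q H r1 r2 √(d / (d + q)) θ =
      (√(d + q) - √d) * (g d q H θ - (r1 * √(d + q) - r2 * √d) / (√(d + q) - √d)) := by
  have hs : 0 < √d := Real.sqrt_pos.mpr hd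
  have hgap : √(d + q) - √d ≠ 0 := (sub_pos.mpr (Real.sqrt_lt_sqrt hd.le (by linarith))).ne'
  have hs2 : √d ^ 2 = d := Real.sq_sqrt hd.le
  have hu2 : √(d + q) ^ 2 = d + q := Real.sq_sqrt (by linarith)
  rw [Real.sqrt_div hd.le, f, g]
  field_simp
  linear_combination (√(d + q) + √d) * ((d + q) * hs2 - d * hu2)

end SqrtRatioCriterion

open SqrtRatioCriterion in
theorem stmt_3_general (d q H r1 r2 : ℝ) (hd : 0 < d) (hq : 0 < q) (hH : 0 < H)
    (hbig : (r1 * Real.sqrt (d + q) - r2 * Real.sqrt d) / (Real.sqrt (d + q) - Real.sqrt d) >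
      2 * d + q + H * Real.sqrt (d + q) / (Real.sqrt (d + q) - Real.sqrt d)) :
    ∀ θ ∈ Set.Icc (0:ℝ) 1,
      Real.sqrt (d / (d + q)) *
          (r2 - (1 - θ) * H - d + (d + q) * Real.sqrt (d / (d + q))) -
        (r1 - θ * H - (d + q) + d / Real.sqrt (d / (d + q))) < 0 := by
  rintro θ ⟨-, hθ1⟩
  have hgap : 0 < √(d + q) - √d := sub_pos.mpr (Real.sqrt_lt_sqrt hd.le (by linarith))
  have hg : g d q H θ < (r1 * √(d + q) - r2 * √d) / (√(d + q) - √d) :=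
    calc g d q H θ ≤ g d q H 1 := g_monotone hq.le hH.le hθ1
      _ < _ := (g_one d q H).trans_lt hbig
  have hprod : √(d + q) * f d q H r1 r2 √(d / (d + q)) θ < 0 := by
    rw [sqrt_mul_f_eq hd hq]
    exact mul_neg_of_pos_of_neg hgap (sub_neg.mpr hg)
  exact neg_of_mul_neg_right hprod (Real.sqrt_nonneg _)

theorem stmt_3 (d q H r1 r2 : ℝ) (hd : 0 < d) (hq : 0 < q) (hH : 0 < H)
    (hpos : ∀ θ ∈ Set.Icc (0:ℝ) 1,
      r2 - (1 - θ) * H - d + (d + q) * Real.sqrt (d / (d + q)) > 0)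
    (hbig : (r1 * Real.sqrt (d + q) - r2 * Real.sqrt d) / (Real.sqrt (d + q) - Real.sqrt d) >
      2 * d + q + H * Real.sqrt (d + q) / (Real.sqrt (d + q) - Real.sqrt d)) :
    ∀ θ ∈ Set.Icc (0:ℝ) 1,
      Real.sqrt (d / (d + q)) *
          (r2 - (1 - θ) * H - d + (d + q) * Real.sqrt (d / (d + q))) -
        (r1 - θ * H - (d + q) + d / Real.sqrt (d / (d + q))) < 0 :=
  stmt_3_general d q H r1 r2 hd hq hH hbig
end

section
/- Let (a1,a2) and (b1,b2) be positive solutions of the systems a1(r - c a1) - (d+q)a1 + d a2 = 0, a2(r - H - c a2) + (d+q)a1 - d a2 = 0, and b1(r - H - c b1) - (d+q)b1 + d b2 = 0, b2(r - c b2) + (d+q)b1 - d b2 = 0, respectively. If a1 + a2 = b1 + b2, then r = 2d + q + H/2. -/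
theorem stmt_5 (d q c H r a1 a2 b1 b2 : ℝ)
    (hd : 0 < d) (hq : 0 < q) (hc : 0 < c) (hH : 0 < H)
    (ha1 : 0 < a1) (ha2 : 0 < a2) (hb1 : 0 < b1) (hb2 : 0 < b2)
    (heqa1 : a1 * (r - c * a1) - (d + q) * a1 + d * a2 = 0)
    (heqa2 : a2 * (r - H - c * a2) + (d + q) * a1 - d * a2 = 0)
    (heqb1 : b1 * (r - H - c * b1) - (d + q) * b1 + d * b2 = 0)
    (heqb2 : b2 * (r - c * b2) + (d + q) * b1 - d * b2 = 0)
    (hM : a1 + a2 = b1 + b2) :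
    r = 2 * d + q + H / 2 := by
  have hne : a2 ≠ b1 := by
    intro h
    have hb2' : b2 = a1 := by linarith
    rw [hb2', ← h] at heqb2
    have hcontra : q * (a1 + a2) = 0 := by linear_combination heqb2 - heqa1
    nlinarith
  have claim1 : (a2 - b1) * (2 * c * (a1 - b1) - H) = 0 := by
    linear_combination heqa1 + heqa2 - heqb1 - heqb2 +
      (c * (a1 + a2 - b1 + b2) - r) * hM
  have k1 : 2 * c * (a1 - b1) = H := by
    rcases mul_eq_zero.mp claim1 with h | h
    · exact absurd (by linarith : a2 = b1) hne
    · linarith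
  have hb2' : b2 = a1 + a2 - b1 := by linarith
  subst hb2'
  have key : (a1 - b1) * (r - H / 2 - 2 * d - q) = 0 := by
    linear_combination heqb2 - heqa2 + ((a1 - b1) / 2 + a2) * k1
  have hepos : 0 < a1 - b1 := by nlinarith
  rcases mul_eq_zero.mp key with h | h
  · exact absurd h hepos.ne'
  · linarith
end

section
/- Suppose det(A) > c² u1² u2² > 0, (d+q)u1² - d u2² > 0, u1, u2 > 0, θ ∈ [0,1], and q ≥ 2H with H > 0. Then [H(1-2θ) - q]/c + H(1-2θ) c u1² u2²/det(A) - ((d+q)u1² - d u2²)·[1/(c u1 u2) + H(θ u1 + (1-θ)u2)/det(A)] < 0. -/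
theorem stmt_10 (c d q H θ u1 u2 detA : ℝ)
    (hc : 0 < c) (hd : 0 < d) (hq : 0 < q) (hH : 0 < H)
    (hθ : θ ∈ Set.Icc (0:ℝ) 1) (hu1 : 0 < u1) (hu2 : 0 < u2)
    (hdet : detA > c ^ 2 * u1 ^ 2 * u2 ^ 2) (hdet0 : 0 < c ^ 2 * u1 ^ 2 * u2 ^ 2)
    (hflow : (d + q) * u1 ^ 2 - d * u2 ^ 2 > 0)
    (hqH : q ≥ 2 * H) :
    (H * (1 - 2 * θ) - q) / c + H * (1 - 2 * θ) * c * u1 ^ 2 * u2 ^ 2 / detA -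
      ((d + q) * u1 ^ 2 - d * u2 ^ 2) *
        (1 / (c * u1 * u2) + H * (θ * u1 + (1 - θ) * u2) / detA) < 0 := by
  obtain ⟨hθ0, hθ1⟩ := hθ
  have hD : 0 < detA := lt_trans hdet0 hdet
  have h3 : 0 < ((d + q) * u1 ^ 2 - d * u2 ^ 2) *
      (1 / (c * u1 * u2) + H * (θ * u1 + (1 - θ) * u2) / detA) := by
    apply mul_pos hflow
    have h1 : 0 < 1 / (c * u1 * u2) := by positivity
    have h2 : 0 ≤ H * (θ * u1 + (1 - θ) * u2) / detA := by
      apply div_nonneg _ hD.le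
      have : 0 ≤ θ * u1 + (1 - θ) * u2 := by nlinarith
      positivity
    linarith
  have h12 : (H * (1 - 2 * θ) - q) / c + H * (1 - 2 * θ) * c * u1 ^ 2 * u2 ^ 2 / detA ≤ 0 := by
    rw [div_add_div _ _ (ne_of_gt hc) (ne_of_gt hD)]
    apply div_nonpos_of_nonpos_of_nonneg _ (by positivity)
    rcases le_or_gt (1 - 2 * θ) 0 with hs | hs
    · nlinarith [mul_nonneg (mul_nonneg hH.le (neg_nonneg.2 hs)) hD.le,
        mul_nonneg (mul_nonneg hH.le (neg_nonneg.2 hs)) hdet0.le, mul_pos hq hD]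
    · have h1 : 0 ≤ H * (1 - 2 * θ) * (detA - c ^ 2 * u1 ^ 2 * u2 ^ 2) :=
        mul_nonneg (mul_pos hH hs).le (by linarith)
      have h2 : 0 ≤ (q - 2 * H * (1 - 2 * θ)) * detA :=
        mul_nonneg (by nlinarith) hD.le
      nlinarith [h1, h2]
  linarith
end

section
/- For the n-patch unconstrained harvesting model, if the positive equilibrium satisfies uᵢ* = rᵢ/(2cᵢ) for all i, then the harvesting rates hᵢ = rᵢ/2 + Σⱼ (aᵢⱼ (rⱼ/cⱼ)/(rᵢ/cᵢ) - aⱼᵢ) satisfy the equilibrium equations uᵢ*(rᵢ - hᵢ - cᵢ uᵢ*) + Σⱼ (aᵢⱼ uⱼ* - aⱼᵢ uᵢ*) = 0 for every i, and the total yield equals Σᵢ hᵢ uᵢ* = Σᵢ rᵢ²/(4cᵢ). -/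
theorem stmt_12 (n : ℕ) (hn : 1 ≤ n)
    (r c : Fin n → ℝ) (a : Fin n → Fin n → ℝ)
    (hr : ∀ i, 0 < r i) (hc : ∀ i, 0 < c i) (ha : ∀ i j, 0 ≤ a i j)
    (u h : Fin n → ℝ)
    (hu : ∀ i, u i = r i / (2 * c i))
    (hh : ∀ i, h i = r i / 2 +
      ∑ j, (a i j * ((r j / c j) / (r i / c i)) - a j i)) :
    (∀ i, u i * (r i - h i - c i * u i) + ∑ j, (a i j * u j - a j i * u i) = 0) ∧
    ∑ i, h i * u i = ∑ i, (r i) ^ 2 / (4 * c i) := by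
  have key : ∀ i j, u i * (a i j * ((r j / c j) / (r i / c i)) - a j i)
      = a i j * u j - a j i * u i := by
    intro i j
    have hri := (hr i).ne'
    have hrj := (hr j).ne'
    have hci := (hc i).ne'
    have hcj := (hc j).ne'
    rw [hu i, hu j]
    field_simp
  have hcu : ∀ i, c i * u i = r i / 2 := by
    intro i
    rw [hu i]
    field_simp [(hc i).ne']
  have main : ∀ i, u i * (r i - h i - c i * u i)
      = - ∑ j, (a i j * u j - a j i * u i) := by
    intro i
    rw [hh i, hcu i, ← Finset.sum_congr rfl (fun j _ => key i j),
      ← Finset.mul_sum]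
    ring
  constructor
  · intro i
    rw [main i]; ring
  · have hy : ∀ i, h i * u i = r i ^ 2 / (4 * c i)
        + ∑ j, (a i j * u j - a j i * u i) := by
      intro i
      have := main i
      have hsq : u i * (r i - c i * u i) = r i ^ 2 / (4 * c i) := by
        rw [hcu i, hu i]
        have hci := (hc i).ne'
        field_simp
        ring
      nlinarith [main i]
    rw [Finset.sum_congr rfl (fun i _ => hy i), Finset.sum_add_distrib]
    have hz : ∑ i, ∑ j, (a i j * u j - a j i * u i) = 0 := by
      simp only [Finset.sum_sub_distrib]
      rw [Finset.sum_comm (f := fun i j => a j i * u i)]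
      simp
    rw [hz, add_zero]
end

section
/- Consider the linearization at the origin of the two-patch system with Jacobian J = [[r1 - θH - (d+q), d],[d+q, r2 - (1-θ)H - d]], and let (φ1, φ2) = (d/(2d+q), (d+q)/(2d+q)). Then the spectral bound ρ of J satisfies ρ ≥ (r1 - θH)φ1 + (r2 - (1-θ)H)φ2; in particular if (d/(2d+q))r1 + ((d+q)/(2d+q))r2 > H(d+q)/(2d+q), then ρ > 0 for every θ ∈ [0,1]. -/
theorem stmt_19 (d q H r1 r2 θ : ℝ)
    (hd : 0 < d) (hq : 0 < q) (hH : 0 < H) (hθ : θ ∈ Set.Icc (0:ℝ) 1)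
    (J : Matrix (Fin 2) (Fin 2) ℝ)
    (hJ : J = !![r1 - θ * H - (d + q), d; d + q, r2 - (1 - θ) * H - d])
    (φ1 φ2 : ℝ) (hφ1 : φ1 = d / (2 * d + q)) (hφ2 : φ2 = (d + q) / (2 * d + q))
    (ρ : ℝ)
    (hρ : ρ = sSup ((fun μ : ℂ => μ.re) ''
      spectrum ℂ (J.map ((↑) : ℝ → ℂ)))) :
    ρ ≥ (r1 - θ * H) * φ1 + (r2 - (1 - θ) * H) * φ2 ∧
    ((d / (2 * d + q)) * r1 + ((d + q) / (2 * d + q)) * r2 > H * (d + q) / (2 * d + q) →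
      0 < ρ) := by
  obtain ⟨hθ0, hθ1⟩ := hθ
  set a := r1 - θ * H - (d + q) with ha
  set b := r2 - (1 - θ) * H - d with hb
  have hΔ : (0:ℝ) ≤ (a - b) ^ 2 + 4 * d * (d + q) := by positivity
  set s := Real.sqrt ((a - b) ^ 2 + 4 * d * (d + q)) with hs
  have hs0 : 0 ≤ s := Real.sqrt_nonneg _
  have hs2 : s ^ 2 = (a - b) ^ 2 + 4 * d * (d + q) := Real.sq_sqrt hΔ
  set lp := ((a + b) + s) / 2 with hlp
  set lm := ((a + b) - s) / 2 with hlm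
  -- compute the spectrum
  have hspec : spectrum ℂ (J.map ((↑) : ℝ → ℂ)) = {(lp : ℂ), (lm : ℂ)} := by
    ext μ
    rw [spectrum.mem_iff]
    have hmat : algebraMap ℂ (Matrix (Fin 2) (Fin 2) ℂ) μ - J.map ((↑) : ℝ → ℂ)
        = !![μ - (a : ℂ), -(d : ℂ); -((d : ℂ) + (q : ℂ)), μ - (b : ℂ)] := by
      subst hJ
      ext i j
      fin_cases i <;> fin_cases j <;>
        simp [Matrix.algebraMap_matrix_apply, Matrix.map_apply, ha, hb] <;> push_cast <;> ring
    rw [hmat, Matrix.isUnit_iff_isUnit_det, Matrix.det_fin_two_of, isUnit_iff_ne_zero,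
      not_ne_iff]
    have hfac : (μ - (a : ℂ)) * (μ - (b : ℂ)) - (-(d : ℂ)) * (-((d : ℂ) + (q : ℂ)))
        = (μ - (lp : ℂ)) * (μ - (lm : ℂ)) := by
      have h1 : (lp : ℂ) + lm = (a : ℂ) + b := by
        push_cast [hlp, hlm]; ring
      have h2 : (lp : ℂ) * lm = (a : ℂ) * b - (d : ℂ) * ((d : ℂ) + q) := by
        have h3 : lp * lm = a * b - d * (d + q) := by
          rw [hlp, hlm]
          linear_combination (-(1:ℝ)/4) * hs2
        rw [← Complex.ofReal_mul, h3]; push_cast; ring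
      linear_combination μ * h1 - h2
    rw [hfac, mul_eq_zero, sub_eq_zero, sub_eq_zero]
    simp [Set.mem_insert_iff]
  have himg : ((fun μ : ℂ => μ.re) '' spectrum ℂ (J.map ((↑) : ℝ → ℂ))) = {lp, lm} := by
    rw [hspec, Set.image_pair]
    simp
  have hρ' : ρ = lp := by
    rw [hρ, himg, csSup_pair]
    exact max_eq_left (by rw [hlp, hlm]; linarith)
  have ht : (0:ℝ) < 2 * d + q := by linarith
  -- key inequality : s ≥ (4 d (d+q) - q (a-b)) / (2d+q)
  have hkey : 4 * d * (d + q) - q * (a - b) ≤ s * (2 * d + q) := by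
    rcases le_or_gt (4 * d * (d + q) - q * (a - b)) 0 with h | h
    · nlinarith [mul_nonneg hs0 ht.le]
    · have hsq : (4 * d * (d + q) - q * (a - b)) ^ 2 ≤ ((a - b) ^ 2 + 4 * d * (d + q)) * (2 * d + q) ^ 2 := by
        nlinarith [sq_nonneg (a - b + q), mul_pos hd (by linarith : (0:ℝ) < d + q), sq_nonneg (a - b)]
      calc 4 * d * (d + q) - q * (a - b)
          = Real.sqrt ((4 * d * (d + q) - q * (a - b)) ^ 2) := (Real.sqrt_sq h.le).symm
        _ ≤ Real.sqrt (((a - b) ^ 2 + 4 * d * (d + q)) * (2 * d + q) ^ 2) :=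
            Real.sqrt_le_sqrt hsq
        _ = s * (2 * d + q) := by
            rw [Real.sqrt_mul hΔ, Real.sqrt_sq ht.le]
  have hmain : (r1 - θ * H) * φ1 + (r2 - (1 - θ) * H) * φ2 ≤ lp := by
    rw [hφ1, hφ2]
    have heq : (r1 - θ * H) * (d / (2 * d + q)) + (r2 - (1 - θ) * H) * ((d + q) / (2 * d + q))
        = ((r1 - θ * H) * d + (r2 - (1 - θ) * H) * (d + q)) / (2 * d + q) := by
      field_simp
    rw [heq, div_le_iff₀ ht, hlp]
    have : r1 - θ * H = a + (d + q) := by rw [ha]; ring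
    rw [this]
    have : r2 - (1 - θ) * H = b + d := by rw [hb]; ring
    rw [this]
    nlinarith [hkey]
  constructor
  · rw [hρ']; exact hmain
  · intro hr
    have hr' : H * (d + q) < d * r1 + (d + q) * r2 := by
      have h2 : d / (2 * d + q) * r1 + (d + q) / (2 * d + q) * r2
          = (d * r1 + (d + q) * r2) / (2 * d + q) := by field_simp
      rw [h2, gt_iff_lt, div_lt_div_iff₀ ht ht] at hr
      exact lt_of_mul_lt_mul_right hr ht.le
    have hw : 0 < (r1 - θ * H) * φ1 + (r2 - (1 - θ) * H) * φ2 := by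
      rw [hφ1, hφ2]
      have heq : (r1 - θ * H) * (d / (2 * d + q)) + (r2 - (1 - θ) * H) * ((d + q) / (2 * d + q))
          = ((r1 - θ * H) * d + (r2 - (1 - θ) * H) * (d + q)) / (2 * d + q) := by
        field_simp
      rw [heq, lt_div_iff₀ ht]
      have hid : (r1 - θ * H) * d + (r2 - (1 - θ) * H) * (d + q)
          = (d * r1 + (d + q) * r2 - H * (d + q)) + H * θ * q := by ring
      have hprod : 0 ≤ H * θ * q := mul_nonneg (mul_nonneg hH.le hθ0) hq.le
      rw [hid]
      linarith
    linarith [hmain, hρ'.ge, hρ'.le]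
end
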